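/- Let G and H be groups and τ : G → H a half-isomorphism. Then τ maps the commutator subgroup of G onto the commutator subgroup of H: τ([G,G]) = [H,H]. -/

import Mathlib

/-!
Composing a half-homomorphism `τ : G → H` with `H → H/[H,H]` gives a genuine homomorphism, because
`τ x τ y` and `τ y τ x` agree modulo `[H,H]`; hence `τ([G,G]) ⊆ [H,H]`. For the reverse inclusion
one shows that `τ⁻¹` is again a half-homomorphism. The only obstruction is a commuting pair
`x y = y x` with `τ(xy) = τ(yx) = τ y τ x`; it disappears because half-homomorphisms preserve
commuting pairs, which follows by computing `τ(x²y)` and `τ((xy)²) = τ(x²y · y)` in two ways.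
-/

def IsHalfHom {G H : Type*} [Mul G] [Mul H] (τ : G → H) : Prop :=
  ∀ x y : G, τ (x * y) = τ x * τ y ∨ τ (x * y) = τ y * τ x

namespace IsHalfHom

variable {G H : Type*} [Group G] [Group H] {τ : G → H}

theorem map_mul_self (hτ : IsHalfHom τ) (x : G) : τ (x * x) = τ x * τ x :=
  (hτ x x).elim id id

theorem map_one (hτ : IsHalfHom τ) : τ 1 = 1 := by
  simpa using hτ.map_mul_self 1

theorem commute_of_map_mul (hτ : IsHalfHom τ) {x y : G} (hxy : Commute x y)
    (hmul : τ (x * y) = τ x * τ y) : Commute (τ x) (τ y) := by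
  set a := τ x
  set b := τ y
  set c := τ (x * x * y)
  have hc₁ : c = a * a * b ∨ c = b * (a * a) := by
    simpa only [c, hτ.map_mul_self] using hτ (x * x) y
  have hc₂ : c = a * (a * b) ∨ c = a * b * a := by
    simpa only [c, mul_assoc x x y, hmul] using hτ x (x * y)
  have hsq : a * b * (a * b) = c * b ∨ a * b * (a * b) = b * c := by
    have : x * x * y * y = x * y * (x * y) := by
      rw [mul_assoc x y, ← mul_assoc y, ← hxy.eq]; group
    simpa only [this, hτ.map_mul_self, hmul] using hτ (x * x * y) y
  show a * b = b * a
  rcases hc₂ with hc | hc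
  · rcases hsq with h | h <;> rw [hc] at h
    · simp only [mul_assoc, mul_right_inj] at h
      simpa [← mul_assoc, eq_comm] using h
    · simpa [← mul_assoc] using h
  · rcases hc₁ with h | h <;> rw [hc] at h
    · simpa [mul_assoc, eq_comm] using h
    · simpa [← mul_assoc] using h

theorem map_commute (hτ : IsHalfHom τ) {x y : G} (hxy : Commute x y) :
    Commute (τ x) (τ y) := by
  rcases hτ x y with hmul | hmul
  · exact hτ.commute_of_map_mul hxy hmul
  · exact (hτ.commute_of_map_mul hxy.symm (hxy.eq ▸ hmul)).symm

theorem symm {e : G ≃ H} (he : IsHalfHom e) : IsHalfHom e.symm := by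
  intro a b
  obtain ⟨x, rfl⟩ := e.surjective a
  obtain ⟨y, rfl⟩ := e.surjective b
  simp only [Equiv.symm_apply_apply, Equiv.symm_apply_eq]
  rcases he x y with h | hxy
  · exact .inl h.symm
  rcases he y x with hyx | h
  · -- `e (x * y) = e (y * x)`, so `x` and `y` commute, and then so do their images.
    have hcomm : Commute x y := e.injective (hxy.trans hyx.symm)
    exact .inl (hxy.trans (he.map_commute hcomm).eq.symm).symm
  · exact .inr h.symm

def toAbelianization (hτ : IsHalfHom τ) : G →* Abelianization H where
  toFun x := Abelianization.of (τ x)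
  map_one' := by simp [hτ.map_one]
  map_mul' x y := by
    rcases hτ x y with h | h <;> rw [h, map_mul]
    exact mul_comm _ _

theorem map_mem_commutator (hτ : IsHalfHom τ) {x : G} (hx : x ∈ commutator G) :
    τ x ∈ commutator H :=
  (QuotientGroup.eq_one_iff (τ x)).mp
    (Abelianization.commutator_subset_ker hτ.toAbelianization hx)

end IsHalfHom

/-- A half-isomorphism of groups maps the commutator subgroup onto the
commutator subgroup. -/
theorem half_isomorphism_commutator {G H : Type*} [Group G] [Group H] (τ : G → H)
    (hbij : Function.Bijective τ)
    (hhalf : ∀ x y : G, τ (x * y) = τ x * τ y ∨ τ (x * y) = τ y * τ x) :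
    τ '' (commutator G : Set G) = (commutator H : Set H) := by
  let e : G ≃ H := Equiv.ofBijective τ hbij
  have he : IsHalfHom e := hhalf
  ext h
  constructor
  · rintro ⟨x, hx, rfl⟩
    exact he.map_mem_commutator hx
  · intro hh
    exact ⟨e.symm h, he.symm.map_mem_commutator hh, e.apply_symm_apply h⟩
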